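/- With f_{r,s,t}(q) defined as the sum Σ_{j1+j2=r, j1'+j2'=s, j1+j1'=t} q^{j1·j2'}/((q)_{j1}(q)_{j2}(q)_{j1'}(q)_{j2'}), the identity q^s · f_{r-1,s,t}(q) + f_{r,s-1,t}(q) = q^r · f_{s-1,r,t}(q) + f_{s,r-1,t}(q) holds for all positive integers r,s and nonnegative t. -/
import Mathlib


open Finset

/-- The q-Pochhammer symbol `(q)_m = ∏_{i=1}^m (1 - q^i)` in `ℚ(q)`. -/
noncomputable def qPoch (q : RatFunc ℚ) (m : ℕ) : RatFunc ℚ :=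
  ∏ i ∈ range m, (1 - q ^ (i + 1))

/-- `f_{r,s,t}(q)` with `q = X` the generic variable of `ℚ(q)`. -/
noncomputable def fq (r s t : ℕ) : RatFunc ℚ :=
  ∑ j1 ∈ range (r + 1), ∑ j1' ∈ range (s + 1),
    if j1 + j1' = t then
      (RatFunc.X : RatFunc ℚ) ^ (j1 * (s - j1')) /
        (qPoch RatFunc.X j1 * qPoch RatFunc.X (r - j1) *
          qPoch RatFunc.X j1' * qPoch RatFunc.X (s - j1'))
    else 0



noncomputable def gb : ℕ → ℕ → RatFunc ℚ
  | _, 0 => 1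
  | 0, _+1 => 0
  | n+1, k+1 => gb n k + RatFunc.X^(k+1) * gb n (k+1)

lemma gb_zero (n : ℕ) : gb n 0 = 1 := by cases n <;> rfl

lemma gb_eq_zero : ∀ n k : ℕ, n < k → gb n k = 0
  | 0, _+1, _ => rfl
  | n+1, k+1, h => by
      rw [gb, gb_eq_zero n k (by omega), gb_eq_zero n (k+1) (by omega)]
      ring

lemma pascal (n m : ℕ) : gb (n+1) m = (if m = 0 then 0 else gb n (m-1)) + RatFunc.X^m * gb n m := by
  cases m with
  | zero => simp [gb_zero]
  | succ k => simp [gb]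


lemma X_pow_ne_one (k : ℕ) : (RatFunc.X : RatFunc ℚ)^(k+1) ≠ 1 := by
  intro h
  have h2 : (algebraMap (Polynomial ℚ) (RatFunc ℚ)) (Polynomial.X ^ (k+1)) =
      (algebraMap (Polynomial ℚ) (RatFunc ℚ)) 1 := by
    rw [map_pow, map_one, RatFunc.algebraMap_X, h]
  have := IsFractionRing.injective (Polynomial ℚ) (RatFunc ℚ) h2
  have hd := congrArg Polynomial.natDegree this
  simp [Polynomial.natDegree_X_pow] at hd

lemma one_sub_ne (k : ℕ) : (1 - (RatFunc.X : RatFunc ℚ)^(k+1)) ≠ 0 :=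
  sub_ne_zero.mpr (Ne.symm (X_pow_ne_one k))

lemma qPoch_succ (q : RatFunc ℚ) (n : ℕ) : qPoch q (n+1) = qPoch q n * (1 - q^(n+1)) :=
  prod_range_succ _ _

lemma qPoch_ne_zero (n : ℕ) : qPoch RatFunc.X n ≠ 0 := by
  unfold qPoch
  exact prod_ne_zero_iff.mpr fun i _ => one_sub_ne i
lemma gb_mul : ∀ n k : ℕ, k ≤ n →
    gb n k * (qPoch RatFunc.X k * qPoch RatFunc.X (n - k)) = qPoch RatFunc.X n := by
  intro n
  induction n with
  | zero => intro k hk; interval_cases k; simp [gb_zero, qPoch]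
  | succ n ih =>
    intro k hk
    cases k with
    | zero => simp [gb_zero, qPoch]
    | succ m =>
      rcases Nat.lt_or_ge m n with hmn | hmn
      · obtain ⟨d, rfl⟩ : ∃ d, n = m + 1 + d := ⟨n - (m+1), by omega⟩
        have I1 := ih m (by omega)
        have I2 := ih (m+1) (by omega)
        rw [show m + 1 + d - m = d + 1 from by omega] at I1
        rw [show m + 1 + d - (m+1) = d from by omega] at I2
        rw [show m + 1 + d + 1 - (m + 1) = d + 1 from by omega]
        rw [gb]
        rw [show m + 1 + d + 1 = (m + 1 + d) + 1 from rfl, qPoch_succ, qPoch_succ, qPoch_succ]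
        rw [qPoch_succ] at I1
        rw [qPoch_succ] at I2
        linear_combination (1 - RatFunc.X ^ (m+1)) * I1
          + RatFunc.X ^ (m+1) * (1 - RatFunc.X ^ (d+1)) * I2
      · have hm : m = n := by omega
        subst hm
        have hgb : gb (m+1) (m+1) = gb m m := by
          rw [gb, gb_eq_zero m (m+1) (by omega)]; ring
        have hself : gb m m = 1 := by
          have := ih m le_rfl
          rw [Nat.sub_self] at this
          have h0 : qPoch RatFunc.X 0 = 1 := by simp [qPoch]
          rw [h0, mul_one] at this
          exact mul_right_cancel₀ (qPoch_ne_zero m) (by rw [this, one_mul])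
        rw [hgb, hself, Nat.sub_self]
        simp [qPoch]

lemma gb_eq {n k : ℕ} (h : k ≤ n) :
    gb n k = qPoch RatFunc.X n / (qPoch RatFunc.X k * qPoch RatFunc.X (n - k)) := by
  rw [eq_div_iff (mul_ne_zero (qPoch_ne_zero _) (qPoch_ne_zero _))]
  exact gb_mul n k h

lemma vdm (r s : ℕ) : ∀ t : ℕ,
    ∑ j ∈ range (t+1), RatFunc.X ^ (j * (s - (t - j))) * gb r j * gb s (t - j)
      = gb (r + s) t := by
  induction s with
  | zero =>
    intro t
    rw [Finset.sum_eq_single_of_mem t (self_mem_range_succ t)]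
    · simp [gb_zero]
    · intro j hj hjt
      rw [gb_eq_zero 0 (t - j) (by rw [mem_range] at hj; omega), mul_zero]
  | succ s ih =>
    intro t
    have hsum : ∀ j ∈ range (t+1),
        RatFunc.X ^ (j * (s + 1 - (t - j))) * gb r j * gb (s+1) (t - j)
        = RatFunc.X ^ (j * (s + 1 - (t - j))) * gb r j *
            ((if t - j = 0 then 0 else gb s (t - j - 1)) + RatFunc.X ^ (t - j) * gb s (t - j)) := by
      intro j _; rw [pascal]
    rw [Finset.sum_congr rfl hsum]
    simp only [mul_add]
    rw [Finset.sum_add_distrib]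
    have hB : ∑ j ∈ range (t+1),
        RatFunc.X ^ (j * (s + 1 - (t - j))) * gb r j * (RatFunc.X ^ (t - j) * gb s (t - j))
        = RatFunc.X ^ t * ∑ j ∈ range (t+1),
            RatFunc.X ^ (j * (s - (t - j))) * gb r j * gb s (t - j) := by
      rw [Finset.mul_sum]
      refine Finset.sum_congr rfl fun j hj => ?_
      rw [mem_range] at hj
      by_cases hd : t - j ≤ s
      · have h1 : s + 1 - (t - j) = (s - (t - j)) + 1 := by omega
        rw [h1, Nat.mul_succ, pow_add]
        calc RatFunc.X ^ (j * (s - (t-j))) * RatFunc.X ^ j * gb r j *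
              (RatFunc.X ^ (t - j) * gb s (t - j))
            = RatFunc.X ^ (j * (s - (t-j))) * (RatFunc.X ^ j * RatFunc.X ^ (t - j)) *
              (gb r j * gb s (t - j)) := by ring
          _ = _ := by
              rw [← pow_add, show j + (t - j) = t from by omega]; ring
      · rw [gb_eq_zero s (t - j) (by omega)]; ring
    rw [hB, ih t]
    have hA : ∑ j ∈ range (t+1),
        RatFunc.X ^ (j * (s + 1 - (t - j))) * gb r j * (if t - j = 0 then 0 else gb s (t - j - 1))
        = if t = 0 then 0 else gb (r + s) (t - 1) := by
      cases t with
      | zero => simp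
      | succ u =>
        rw [if_neg (by omega)]
        rw [Finset.sum_range_succ, if_pos (by omega), mul_zero, add_zero]
        rw [show u + 1 - 1 = u from rfl, ← ih u]
        refine Finset.sum_congr rfl fun j hj => ?_
        rw [mem_range] at hj
        rw [if_neg (by omega)]
        have h1 : s + 1 - (u + 1 - j) = s - (u - j) := by omega
        have h2 : u + 1 - j - 1 = u - j := by omega
        rw [h1, h2]
    rw [hA, show r + (s+1) = (r+s)+1 from by omega, pascal]
lemma double_single (r s t : ℕ) (F : ℕ → ℕ → RatFunc ℚ)
    (h1 : ∀ a b, r < a → F a b = 0) (h2 : ∀ a b, s < b → F a b = 0) :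
    ∑ a ∈ range (r+1), ∑ b ∈ range (s+1), (if a + b = t then F a b else 0)
      = ∑ j ∈ range (t+1), F j (t - j) := by
  have hinner : ∀ a, ∑ b ∈ range (s+1), (if a + b = t then F a b else 0)
      = if a ≤ t ∧ t - a ≤ s then F a (t - a) else 0 := by
    intro a
    by_cases ha : a ≤ t ∧ t - a ≤ s
    · rw [if_pos ha, Finset.sum_eq_single_of_mem (t - a) (mem_range.2 (by omega))]
      · rw [if_pos (by omega)]
      · intro b _ hb; rw [if_neg (by omega)]
    · rw [if_neg ha]
      refine Finset.sum_eq_zero fun b hb => ?_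
      rw [mem_range] at hb
      rw [if_neg (by omega)]
  simp only [hinner]
  have hL : ∑ a ∈ range (r+1), (if a ≤ t ∧ t - a ≤ s then F a (t - a) else 0)
      = ∑ a ∈ range (max r t + 1), (if a ≤ t ∧ t - a ≤ s then F a (t - a) else 0) := by
    refine Finset.sum_subset (by intro x hx; rw [mem_range] at *; omega) ?_
    intro x hx hxr
    rw [mem_range] at hx; rw [mem_range] at hxr
    by_cases hc : x ≤ t ∧ t - x ≤ s
    · rw [if_pos hc, h1 x (t - x) (by omega)]
    · rw [if_neg hc]
  have hR : ∑ a ∈ range (max r t + 1), (if a ≤ t ∧ t - a ≤ s then F a (t - a) else 0)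
      = ∑ a ∈ range (t+1), (if a ≤ t ∧ t - a ≤ s then F a (t - a) else 0) := by
    refine (Finset.sum_subset (by intro x hx; rw [mem_range] at *; omega) ?_).symm
    intro x hx hxr
    rw [mem_range] at hx; rw [mem_range] at hxr
    rw [if_neg (by omega)]
  rw [hL, hR]
  refine Finset.sum_congr rfl fun a ha => ?_
  rw [mem_range] at ha
  by_cases hc : t - a ≤ s
  · rw [if_pos ⟨by omega, hc⟩]
  · rw [if_neg (by omega), h2 a (t - a) (by omega)]

lemma fq_eq (r s t : ℕ) :
    fq r s t = gb (r + s) t / (qPoch RatFunc.X r * qPoch RatFunc.X s) := by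
  unfold fq
  have step1 : ∀ j1 ∈ range (r+1), ∀ j1' ∈ range (s+1),
      (if j1 + j1' = t then
        (RatFunc.X : RatFunc ℚ) ^ (j1 * (s - j1')) /
          (qPoch RatFunc.X j1 * qPoch RatFunc.X (r - j1) *
            qPoch RatFunc.X j1' * qPoch RatFunc.X (s - j1'))
      else 0)
      = if j1 + j1' = t then
          (RatFunc.X : RatFunc ℚ) ^ (j1 * (s - j1')) * gb r j1 * gb s j1'
            / (qPoch RatFunc.X r * qPoch RatFunc.X s) else 0 := by
    intro j1 hj1 j1' hj1'
    rw [mem_range] at hj1 hj1'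
    by_cases hc : j1 + j1' = t
    · rw [if_pos hc, if_pos hc,
        div_eq_div_iff
          (by exact mul_ne_zero (mul_ne_zero (mul_ne_zero (qPoch_ne_zero _) (qPoch_ne_zero _)) (qPoch_ne_zero _)) (qPoch_ne_zero _))
          (mul_ne_zero (qPoch_ne_zero _) (qPoch_ne_zero _))]
      linear_combination
        (-(RatFunc.X ^ (j1 * (s - j1')) * gb s j1' * qPoch RatFunc.X j1' *
            qPoch RatFunc.X (s - j1'))) * gb_mul r j1 (by omega)
        + (-(RatFunc.X ^ (j1 * (s - j1')) * qPoch RatFunc.X r)) * gb_mul s j1' (by omega)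
    · rw [if_neg hc, if_neg hc]
  rw [Finset.sum_congr rfl fun j1 hj1 => Finset.sum_congr rfl fun j1' hj1' =>
        step1 j1 hj1 j1' hj1']
  rw [double_single r s t
      (fun a b => (RatFunc.X : RatFunc ℚ) ^ (a * (s - b)) * gb r a * gb s b
        / (qPoch RatFunc.X r * qPoch RatFunc.X s))
      (fun a b ha => by simp [gb_eq_zero r a ha])
      (fun a b hb => by simp [gb_eq_zero s b hb])]
  rw [← Finset.sum_div, vdm r s t]
theorem fq_rec (r s t : ℕ) (hr : 1 ≤ r) (hs : 1 ≤ s) :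
    (RatFunc.X : RatFunc ℚ) ^ s * fq (r - 1) s t + fq r (s - 1) t
      = (RatFunc.X : RatFunc ℚ) ^ r * fq (s - 1) r t + fq s (r - 1) t := by
  obtain ⟨a, rfl⟩ : ∃ a, r = a + 1 := ⟨r - 1, by omega⟩
  obtain ⟨b, rfl⟩ : ∃ b, s = b + 1 := ⟨s - 1, by omega⟩
  simp only [Nat.add_sub_cancel]
  rw [fq_eq, fq_eq, fq_eq, fq_eq]
  rw [show a + (b + 1) = a + b + 1 from by omega,
      show a + 1 + b = a + b + 1 from by omega,
      show b + (a + 1) = a + b + 1 from by omega,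
      show b + 1 + a = a + b + 1 from by omega]
  rw [qPoch_succ RatFunc.X a, qPoch_succ RatFunc.X b]
  have ha := qPoch_ne_zero a
  have hb := qPoch_ne_zero b
  have hA := one_sub_ne a
  have hB := one_sub_ne b
  field_simp
  ring
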